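/- In max-times algebra, if an n×n nonnegative matrix B satisfies Tr(B) = max_{1≤k≤n} (max-times trace of B^k) ≤ 1, then the Kleene star B* = I ⊕ B ⊕ ... ⊕ B^{n-1} (entrywise maximum of max-times powers) satisfies B* ≥ B^p entrywise for every integer p ≥ 0. -/

import Mathlib

/-!
Entries of max-times powers are weights of paths: `(B^p)ᵢⱼ` is `0` or the maximal weight
`B f₀f₁ ⋯ B fₚ₋₁fₚ` of a path `i = f₀, …, fₚ = j`. A path of length `p ≥ n` revisits a vertex
within its first `n` steps, and the closed subwalk of length `c ≤ n` weighs at most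
`tr(B^c) ≤ 1`. Cutting it out bounds the weight by that of the prefix times that of the suffix,
two paths meeting at the repeated vertex, hence (as `B^a ⊗ B^d ≤ B^(a+d)`) by an entry of
`B^(p - c)`. Strong induction on `p` thus bounds every entry of `B^p` by one of some `B^q`, `q < n`.
-/

/-- Maximum of a function over `Fin n` (nonempty since `0 < n`). -/
noncomputable def vmax {n : ℕ} (hn : 0 < n) (f : Fin n → ℝ) : ℝ :=
  Finset.univ.sup' (Finset.univ_nonempty_iff.mpr ⟨⟨0, hn⟩⟩) f

/-- Minimum of a function over `Fin n`. -/
noncomputable def vmin {n : ℕ} (hn : 0 < n) (f : Fin n → ℝ) : ℝ :=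
  Finset.univ.inf' (Finset.univ_nonempty_iff.mpr ⟨⟨0, hn⟩⟩) f

/-- Max-times matrix product. -/
noncomputable def mtProd {n : ℕ} (hn : 0 < n) (X Y : Matrix (Fin n) (Fin n) ℝ) :
    Matrix (Fin n) (Fin n) ℝ :=
  fun i j => vmax hn (fun k => X i k * Y k j)

/-- Max-times matrix powers, `B^0 = I`. -/
noncomputable def mtPow {n : ℕ} (hn : 0 < n) (B : Matrix (Fin n) (Fin n) ℝ) :
    ℕ → Matrix (Fin n) (Fin n) ℝ
  | 0 => fun i j => if i = j then (1 : ℝ) else 0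
  | (k + 1) => mtProd hn B (mtPow hn B k)

/-- Kleene star: entrywise maximum of `B^0, ..., B^(n-1)`. -/
noncomputable def kstar {n : ℕ} (hn : 0 < n) (B : Matrix (Fin n) (Fin n) ℝ) :
    Matrix (Fin n) (Fin n) ℝ :=
  fun i j => vmax hn (fun k : Fin n => mtPow hn B k.1 i j)

/-- Max-times matrix-vector product. -/
noncomputable def mtVec {n : ℕ} (hn : 0 < n) (X : Matrix (Fin n) (Fin n) ℝ)
    (x : Fin n → ℝ) : Fin n → ℝ :=
  fun i => vmax hn (fun j => X i j * x j)

open Finset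

section vmax

variable {n : ℕ} (hn : 0 < n) (f : Fin n → ℝ)

theorem le_vmax (i : Fin n) : f i ≤ vmax hn f :=
  le_sup' f (mem_univ i)

theorem exists_vmax_eq : ∃ i, vmax hn f = f i := by
  obtain ⟨i, -, hi⟩ := exists_mem_eq_sup' (univ_nonempty_iff.mpr ⟨⟨0, hn⟩⟩) f
  exact ⟨i, hi⟩

end vmax

def pathWeight {n : ℕ} (B : Matrix (Fin n) (Fin n) ℝ) (f : ℕ → Fin n) (p : ℕ) : ℝ :=
  ∏ t ∈ range p, B (f t) (f (t + 1))

section pathWeight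

variable {n : ℕ} {B : Matrix (Fin n) (Fin n) ℝ}

theorem pathWeight_nonneg (hB : ∀ i j, 0 ≤ B i j) (f : ℕ → Fin n) (p : ℕ) : 0 ≤ pathWeight B f p :=
  prod_nonneg fun _ _ => hB _ _

theorem pathWeight_succ (f : ℕ → Fin n) (p : ℕ) :
    pathWeight B f (p + 1) = B (f 0) (f 1) * pathWeight B (fun t => f (t + 1)) p := by
  rw [pathWeight, prod_range_succ', mul_comm]
  rfl

theorem pathWeight_add (f : ℕ → Fin n) (a d : ℕ) :
    pathWeight B f (a + d) = pathWeight B f a * pathWeight B (fun t => f (a + t)) d := by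
  simp only [pathWeight, prod_range_add, add_assoc]

/-- When `f (a + c) = f a`, the right-hand side is the weight of `f` with the closed subwalk
from step `a` to step `a + c` cut out. -/
theorem pathWeight_le_of_cycle (hB : ∀ i j, 0 ≤ B i j) (f : ℕ → Fin n) {a c : ℕ}
    (hcyc : pathWeight B (fun t => f (a + t)) c ≤ 1) (d : ℕ) :
    pathWeight B f (a + c + d) ≤ pathWeight B f a * pathWeight B (fun t => f (a + c + t)) d := by
  rw [pathWeight_add, pathWeight_add]
  gcongr
  · exact pathWeight_nonneg hB _ _
  · exact mul_le_of_le_one_right (pathWeight_nonneg hB _ _) hcyc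

end pathWeight

theorem Fin.exists_map_add_eq {n : ℕ} (f : ℕ → Fin n) :
    ∃ a c, 0 < c ∧ a + c ≤ n ∧ f (a + c) = f a := by
  obtain ⟨x, y, hxy, hf⟩ := Fintype.exists_ne_map_eq_of_card_lt
    (fun t : Fin (n + 1) => f t) (by simp)
  rcases lt_or_gt_of_ne (Fin.val_ne_of_ne hxy) with h | h
  · exact ⟨x, y - x, by omega, by omega, by rw [Nat.add_sub_cancel' h.le]; exact hf.symm⟩
  · exact ⟨y, x - y, by omega, by omega, by rw [Nat.add_sub_cancel' h.le]; exact hf⟩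

section mtPow

variable {n : ℕ} (hn : 0 < n) {B : Matrix (Fin n) (Fin n) ℝ}

theorem mtPow_succ_apply (p : ℕ) (i j : Fin n) :
    mtPow hn B (p + 1) i j = vmax hn fun k => B i k * mtPow hn B p k j :=
  rfl

theorem mul_mtPow_le_mtPow_succ (p : ℕ) (i k j : Fin n) :
    B i k * mtPow hn B p k j ≤ mtPow hn B (p + 1) i j :=
  le_vmax hn (fun k => B i k * mtPow hn B p k j) k

theorem mtPow_nonneg (hB : ∀ i j, 0 ≤ B i j) (p : ℕ) (i j : Fin n) : 0 ≤ mtPow hn B p i j := by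
  induction p generalizing i with
  | zero => unfold mtPow; split_ifs <;> norm_num
  | succ p ih => exact (mul_nonneg (hB i i) (ih i)).trans (mul_mtPow_le_mtPow_succ hn p i i j)

theorem pathWeight_le_mtPow (hB : ∀ i j, 0 ≤ B i j) (p : ℕ) (f : ℕ → Fin n) :
    pathWeight B f p ≤ mtPow hn B p (f 0) (f p) := by
  induction p generalizing f with
  | zero => simp [pathWeight, mtPow]
  | succ p ih =>
    rw [pathWeight_succ]
    calc B (f 0) (f 1) * pathWeight B (fun t => f (t + 1)) p
        ≤ B (f 0) (f 1) * mtPow hn B p (f 1) (f (p + 1)) :=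
          mul_le_mul_of_nonneg_left (ih _) (hB _ _)
      _ ≤ mtPow hn B (p + 1) (f 0) (f (p + 1)) := mul_mtPow_le_mtPow_succ hn p _ _ _

theorem mtPow_eq_zero_or_eq_pathWeight (p : ℕ) (i j : Fin n) :
    mtPow hn B p i j = 0 ∨
      ∃ f : ℕ → Fin n, f 0 = i ∧ f p = j ∧ mtPow hn B p i j = pathWeight B f p := by
  induction p generalizing i with
  | zero =>
    by_cases h : i = j
    · exact Or.inr ⟨fun _ => i, rfl, h, by simp [mtPow, pathWeight, h]⟩
    · exact Or.inl (if_neg h)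
  | succ p ih =>
    obtain ⟨k, hk⟩ := exists_vmax_eq hn fun k => B i k * mtPow hn B p k j
    rw [← mtPow_succ_apply] at hk
    rcases ih k with h0 | ⟨g, rfl, rfl, hg⟩
    · exact Or.inl (by rw [hk, h0, mul_zero])
    · refine Or.inr ⟨fun | 0 => i | t + 1 => g t, rfl, rfl, ?_⟩
      rw [hk, hg, pathWeight_succ]

theorem mtPow_mul_mtPow_le (hB : ∀ i j, 0 ≤ B i j) (a d : ℕ) (i k j : Fin n) :
    mtPow hn B a i k * mtPow hn B d k j ≤ mtPow hn B (a + d) i j := by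
  induction a generalizing i with
  | zero =>
    by_cases h : i = k
    · simp [mtPow, h]
    · simpa [mtPow, h] using mtPow_nonneg hn hB d i j
  | succ a ih =>
    obtain ⟨l, hl⟩ := exists_vmax_eq hn fun l => B i l * mtPow hn B a l k
    rw [← mtPow_succ_apply] at hl
    calc mtPow hn B (a + 1) i k * mtPow hn B d k j
        = B i l * (mtPow hn B a l k * mtPow hn B d k j) := by rw [hl, mul_assoc]
      _ ≤ B i l * mtPow hn B (a + d) l j := mul_le_mul_of_nonneg_left (ih l) (hB i l)
      _ ≤ mtPow hn B (a + d + 1) i j := mul_mtPow_le_mtPow_succ hn (a + d) i l j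
      _ = mtPow hn B (a + 1 + d) i j := by rw [Nat.succ_add]

theorem mtPow_le_kstar_of_lt {p : ℕ} (hp : p < n) (i j : Fin n) :
    mtPow hn B p i j ≤ kstar hn B i j :=
  le_vmax hn (fun k : Fin n => mtPow hn B k i j) ⟨p, hp⟩

theorem kstar_nonneg (i j : Fin n) : 0 ≤ kstar hn B i j := by
  refine le_trans ?_ (mtPow_le_kstar_of_lt hn hn i j)
  unfold mtPow
  split_ifs <;> norm_num

end mtPow

theorem kleeneStar_dominates_powers {n : ℕ} (hn : 0 < n)
    (B : Matrix (Fin n) (Fin n) ℝ)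
    (hB : ∀ i j, 0 ≤ B i j)
    (hTr : ∀ k, 1 ≤ k → k ≤ n → ∀ i, mtPow hn B k i i ≤ 1) :
    ∀ p : ℕ, ∀ i j, mtPow hn B p i j ≤ kstar hn B i j := by
  intro p
  induction p using Nat.strong_induction_on with
  | _ p IH =>
  intro i j
  rcases lt_or_ge p n with hp | hp
  · exact mtPow_le_kstar_of_lt hn hp i j
  rcases mtPow_eq_zero_or_eq_pathWeight hn p i j with h0 | ⟨f, rfl, rfl, hf⟩
  · exact h0 ▸ kstar_nonneg hn _ _
  obtain ⟨a, c, hc, hcn, hfac⟩ := Fin.exists_map_add_eq f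
  obtain ⟨d, rfl⟩ := Nat.exists_eq_add_of_le (hcn.trans hp)
  have hcyc : pathWeight B (fun t => f (a + t)) c ≤ 1 := by
    have hcyc_le := pathWeight_le_mtPow hn hB c fun t => f (a + t)
    rw [add_zero, hfac] at hcyc_le
    exact hcyc_le.trans (hTr c hc (by omega) (f a))
  calc mtPow hn B (a + c + d) (f 0) (f (a + c + d))
      = pathWeight B f (a + c + d) := hf
    _ ≤ pathWeight B f a * pathWeight B (fun t => f (a + c + t)) d :=
        pathWeight_le_of_cycle hB f hcyc d
    _ ≤ mtPow hn B a (f 0) (f a) * mtPow hn B d (f a) (f (a + c + d)) := by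
        refine mul_le_mul (pathWeight_le_mtPow hn hB a f) ?_ (pathWeight_nonneg hB _ _)
          (mtPow_nonneg hn hB _ _ _)
        simpa [hfac] using pathWeight_le_mtPow hn hB d fun t => f (a + c + t)
    _ ≤ mtPow hn B (a + d) (f 0) (f (a + c + d)) := mtPow_mul_mtPow_le hn hB a d _ _ _
    _ ≤ kstar hn B (f 0) (f (a + c + d)) := IH (a + d) (by omega) _ _
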